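/- arXiv:2505.13986 — 4 statements merged into one kernel-verified Lean document; each statement's English description precedes it below -/
import Mathlib

section
/- Let N ≥ 1 be an integer. Define g : {1,...,N} → ℝ by g(k) = 1 − cos(2π⌊k/2⌋/N). Then (i) g is monotone nondecreasing on {1,...,N}, and (ii) the multiset {g(k) : 1 ≤ k ≤ N} equals the multiset {1 − cos(2πj/N) : 0 ≤ j ≤ N−1}. In other words, listing the N values 1 − cos(2πj/N), j = 0,...,N−1, in nondecreasing order, the k-th element is 1 − cos(2π⌊k/2⌋/N). -/
/-!
Sorting `1 - cos (2πj/N)` amounts to sorting the frequencies `j` by their distance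
`min j (N - j)` to `0 (mod N)`, since `1 - cos` increases on `[0, π]` and
`cos (2π(N - j)/N) = cos (2πj/N)`. The sorted order of the frequencies is
`0, 1, N - 1, 2, N - 2, …`, whose `k`-th term has distance `⌊k/2⌋`.
-/

open Real

/-- Position `k ≥ 1` of the order `0, 1, N - 1, 2, N - 2, …`. -/
def cycleFrequency (N k : ℕ) : ℕ :=
  if k % 2 = 1 ∧ 1 < k then N - k / 2 else k / 2

lemma cycleFrequency_injOn (N : ℕ) : Set.InjOn (cycleFrequency N) (Set.Icc 1 N) := by
  intro a ⟨ha₁, haN⟩ b ⟨hb₁, hbN⟩ hab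
  unfold cycleFrequency at hab
  split_ifs at hab <;> omega

lemma cycleFrequency_mapsTo (N : ℕ) :
    Set.MapsTo (cycleFrequency N) (Set.Icc 1 N) (Set.Iio N) := by
  intro k ⟨hk₁, hkN⟩
  simp only [cycleFrequency, Set.mem_Iio]
  split_ifs <;> omega

lemma map_cycleFrequency_Icc (N : ℕ) :
    (Finset.Icc 1 N).val.map (cycleFrequency N) = (Finset.range N).val := by
  have himage : (Finset.Icc 1 N).image (cycleFrequency N) = Finset.range N := by
    apply Finset.eq_of_subset_of_card_le
    · exact Finset.image_subset_iff.2 fun k hk => by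
        simpa using cycleFrequency_mapsTo N (by simpa using hk)
    · rw [Finset.card_image_of_injOn (by simpa using cycleFrequency_injOn N), Nat.card_Icc,
        Finset.card_range]
      omega
  rw [← himage, Finset.image_val_of_injOn (by simpa using cycleFrequency_injOn N)]

lemma cos_two_pi_mul_sub_div {N : ℝ} (hN : N ≠ 0) (x : ℝ) :
    cos (2 * π * (N - x) / N) = cos (2 * π * x / N) := by
  rw [← cos_two_pi_sub]
  congr 1
  field_simp
  ring

lemma cos_two_pi_mul_cycleFrequency_div {N k : ℕ} (hk : k ∈ Set.Icc 1 N) :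
    cos (2 * π * (cycleFrequency N k : ℝ) / N) = cos (2 * π * ((k / 2 : ℕ) : ℝ) / N) := by
  obtain ⟨hk₁, hkN⟩ := hk
  unfold cycleFrequency
  split_ifs
  · rw [Nat.cast_sub (by omega), cos_two_pi_mul_sub_div (Nat.cast_ne_zero.2 (by omega))]
  · rfl

lemma monotoneOn_one_sub_cos : MonotoneOn (fun x => 1 - cos x) (Set.Icc 0 π) :=
  fun _ hx _ hy hxy => sub_le_sub_left (antitoneOn_cos hx hy hxy) 1

lemma monotone_two_pi_mul_half_div (N : ℕ) :
    Monotone fun k : ℕ => 2 * π * ((k / 2 : ℕ) : ℝ) / N := by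
  intro a b hab
  show 2 * π * ((a / 2 : ℕ) : ℝ) / N ≤ 2 * π * ((b / 2 : ℕ) : ℝ) / N
  gcongr

lemma two_pi_mul_half_div_mem_Icc {N k : ℕ} (hkN : k ≤ N) :
    2 * π * ((k / 2 : ℕ) : ℝ) / N ∈ Set.Icc 0 π := by
  rcases Nat.eq_zero_or_pos N with rfl | hN
  · simp [pi_nonneg]
  have hhalf : ((k / 2 : ℕ) : ℝ) * 2 ≤ N := by exact_mod_cast (by omega : k / 2 * 2 ≤ N)
  refine ⟨by positivity, ?_⟩
  rw [div_le_iff₀ (by positivity)]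
  nlinarith [pi_pos]

theorem cycle_eigenvalues_sorted_general (N : ℕ) :
    MonotoneOn (fun k : ℕ => 1 - Real.cos (2 * Real.pi * ((k / 2 : ℕ) : ℝ) / (N : ℝ)))
      (Set.Icc 1 N) ∧
    (Finset.Icc 1 N).val.map
        (fun k : ℕ => 1 - Real.cos (2 * Real.pi * ((k / 2 : ℕ) : ℝ) / (N : ℝ)))
      = (Finset.range N).val.map
        (fun j : ℕ => 1 - Real.cos (2 * Real.pi * (j : ℝ) / (N : ℝ))) := by
  constructor
  · exact monotoneOn_one_sub_cos.comp ((monotone_two_pi_mul_half_div N).monotoneOn _)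
      fun k hk => two_pi_mul_half_div_mem_Icc hk.2
  · rw [← map_cycleFrequency_Icc, Multiset.map_map]
    refine Multiset.map_congr rfl fun k hk => ?_
    simp only [Function.comp_apply,
      cos_two_pi_mul_cycleFrequency_div (by simpa using hk : k ∈ Set.Icc 1 N)]

/-- For `N ≥ 1`, the function `g k = 1 - cos (2π⌊k/2⌋/N)` is monotone
nondecreasing on `{1, ..., N}`, and the multiset of its values on `{1, ..., N}` equals the
multiset of the values `1 - cos (2πj/N)` for `0 ≤ j ≤ N - 1`.  In other words, listing the
`N` numbers `1 - cos (2πj/N)`, `j = 0, ..., N-1`, in nondecreasing order, the `k`-th element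
is `1 - cos (2π⌊k/2⌋/N)`. -/
theorem cycle_eigenvalues_sorted (N : ℕ) (hN : 1 ≤ N) :
    MonotoneOn (fun k : ℕ => 1 - Real.cos (2 * Real.pi * ((k / 2 : ℕ) : ℝ) / (N : ℝ)))
      (Set.Icc 1 N) ∧
    (Finset.Icc 1 N).val.map
        (fun k : ℕ => 1 - Real.cos (2 * Real.pi * ((k / 2 : ℕ) : ℝ) / (N : ℝ)))
      = (Finset.range N).val.map
        (fun j : ℕ => 1 - Real.cos (2 * Real.pi * (j : ℝ) / (N : ℝ))) :=
  cycle_eigenvalues_sorted_general N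
end

section
/- For all natural numbers k and N with 2 ≤ k ≤ N, one has √(1 − cos(2π·⌊k/2⌋/N)) ≥ (√2/4)·(1/⌊N/k⌋), where ⌊k/2⌋ and ⌊N/k⌋ denote integer division and all quantities are real numbers. -/
/-!
Since `1 - cos (2x) = 2 sin² x`, the left-hand side is `√2 · sin (π m / N)` with `m = ⌊k/2⌋`, and
Jordan's inequality `sin x ≥ 2x/π` on `[0, π/2]` bounds it below by `2√2 · m / N`. With
`q = ⌊N/k⌋ ≥ 1` we have `N < k (q + 1) ≤ 2kq ≤ 8mq`, which is the claim; when `q = 0` the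
right-hand side is `0` because `1 / 0 = 0` in `ℝ`.
-/

open Real

theorem Real.sqrt_one_sub_cos_two_mul (x : ℝ) : √(1 - cos (2 * x)) = √2 * |sin x| := by
  rw [cos_two_mul, cos_sq', ← sqrt_sq_eq_abs, ← sqrt_mul zero_le_two]
  ring_nf

theorem Real.two_mul_sqrt_two_mul_le_sqrt_one_sub_cos {t : ℝ} (ht₀ : 0 ≤ t) (ht : t ≤ 1 / 2) :
    2 * √2 * t ≤ √(1 - cos (2 * π * t)) := by
  have hx₀ : 0 ≤ π * t := by positivity
  have hx : π * t ≤ π / 2 := by nlinarith [pi_pos]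
  have hjordan : 2 * t ≤ sin (π * t) := by
    have := mul_le_sin hx₀ hx
    rwa [div_mul_eq_mul_div, mul_div_assoc, mul_div_cancel_left₀ _ pi_ne_zero] at this
  rw [mul_assoc 2 π, sqrt_one_sub_cos_two_mul, abs_of_nonneg (by linarith)]
  nlinarith [sqrt_nonneg 2]

theorem Nat.lt_two_mul_mul_div {n k : ℕ} (h : 0 < n / k) : n < 2 * k * (n / k) := by
  have hk : 0 < k := Nat.pos_of_ne_zero fun hk ↦ by simp [hk] at h
  have := Nat.lt_div_mul_add (a := n) hk
  nlinarith

theorem sqrt_cycle_eigenvalue_ge_general (k N : ℕ) (hk : 2 ≤ k) :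
    Real.sqrt (1 - Real.cos (2 * Real.pi * ((k / 2 : ℕ) : ℝ) / (N : ℝ)))
      ≥ (Real.sqrt 2 / 4) * (1 / ((N / k : ℕ) : ℝ)) := by
  obtain hq | hq := (N / k).eq_zero_or_pos
  · simp [hq]
  have hkN : k ≤ N := (Nat.one_le_div_iff (by omega)).mp hq
  have hN : N ≤ 8 * (k / 2) * (N / k) := by
    have := Nat.lt_two_mul_mul_div hq
    nlinarith [show k ≤ 4 * (k / 2) by omega]
  have hN₀ : (0 : ℝ) < N := by exact_mod_cast (by omega : 0 < N)
  have hmN : (2 * (k / 2 : ℕ) : ℝ) ≤ N := by exact_mod_cast (by omega : 2 * (k / 2) ≤ N)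
  have hsin := two_mul_sqrt_two_mul_le_sqrt_one_sub_cos (t := (k / 2 : ℕ) / N) (by positivity)
    (by rw [div_le_iff₀ hN₀]; linarith)
  rw [← mul_div_assoc, ← mul_div_assoc] at hsin
  refine le_trans ?_ hsin
  rw [div_mul_div_comm, div_le_div_iff₀ (by positivity) hN₀, mul_one]
  have hN' : (N : ℝ) ≤ 8 * (k / 2 : ℕ) * (N / k : ℕ) := by exact_mod_cast hN
  nlinarith [sqrt_nonneg 2]

/-- For natural numbers `2 ≤ k ≤ N`,
`√(1 − cos(2π⌊k/2⌋/N)) ≥ (√2/4)·(1/⌊N/k⌋)`, where `⌊k/2⌋` and `⌊N/k⌋` are integer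
divisions and all quantities are real numbers. -/
theorem sqrt_cycle_eigenvalue_ge (k N : ℕ) (hk : 2 ≤ k) (hkN : k ≤ N) :
    Real.sqrt (1 - Real.cos (2 * Real.pi * ((k / 2 : ℕ) : ℝ) / (N : ℝ)))
      ≥ (Real.sqrt 2 / 4) * (1 / ((N / k : ℕ) : ℝ)) :=
  sqrt_cycle_eigenvalue_ge_general k N hk
end

section
/- For all natural numbers k and r with 2 ≤ k ≤ r, one has √(1 − cos(π(k−1)/(r−1))) ≥ (√2/2)·(1/(2⌊r/k⌋)), where ⌊r/k⌋ denotes integer division of r by k and all quantities are real numbers. -/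
/-! The argument `θ = π(k-1)/(r-1)` lies in `[0, π]`, where the concavity bound
`1 - cos θ ≥ 2θ²/π²` gives `√(1 - cos θ) ≥ √2 (k-1)/(r-1)`. Writing `q = ⌊r/k⌋ ≥ 1`,
division with remainder gives `r < k(q+1) ≤ 2kq ≤ 4q(k-1)`, so `(k-1)/(r-1) ≥ 1/(4q)`. -/

open Real

theorem Real.sqrt_two_mul_abs_div_pi_le_sqrt_one_sub_cos {x : ℝ} (hx : |x| ≤ π) :
    √2 * |x| / π ≤ √(1 - cos x) := by
  have hbound : 2 * (|x| / π) ^ 2 ≤ 1 - cos x := by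
    have := cos_le_one_sub_mul_cos_sq hx
    rw [← sq_abs x] at this
    rw [div_pow]
    field_simp at this ⊢
    linarith
  calc √2 * |x| / π = √(2 * (|x| / π) ^ 2) := by
        rw [sqrt_mul zero_le_two, sqrt_sq (by positivity), mul_div_assoc]
    _ ≤ √(1 - cos x) := sqrt_le_sqrt hbound

theorem Nat.lt_two_mul_mul_div_s6 {k r : ℕ} (hk : 0 < k) (hkr : k ≤ r) :
    r < 2 * (k * (r / k)) := by
  have hq : 1 ≤ r / k := (Nat.one_le_div_iff hk).mpr hkr
  calc r < k * (r / k + 1) := Nat.lt_mul_div_succ r hk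
    _ ≤ 2 * (k * (r / k)) := by nlinarith

/-- For natural numbers `2 ≤ k ≤ r`,
`√(1 − cos(π(k−1)/(r−1))) ≥ (√2/2)·(1/(2⌊r/k⌋))`, where `⌊r/k⌋` is integer division and
`cos` is the real cosine. -/
theorem sqrt_path_eigenvalue_ge (k r : ℕ) (hk : 2 ≤ k) (hkr : k ≤ r) :
    Real.sqrt (1 - Real.cos (Real.pi * ((k : ℝ) - 1) / ((r : ℝ) - 1)))
      ≥ (Real.sqrt 2 / 2) * (1 / (2 * ((r / k : ℕ) : ℝ))) := by
  set q := r / k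
  have hq : (1 : ℝ) ≤ q := by exact_mod_cast (Nat.one_le_div_iff (by omega)).mpr hkr
  have hk' : (2 : ℝ) ≤ k := by exact_mod_cast hk
  have hkr' : (k : ℝ) ≤ r := by exact_mod_cast hkr
  have hr : (r : ℝ) < 4 * q * ((k : ℝ) - 1) := by
    have : (r : ℝ) < 2 * (k * q) := by exact_mod_cast Nat.lt_two_mul_mul_div_s6 (by omega) hkr
    nlinarith
  set x := ((k : ℝ) - 1) / ((r : ℝ) - 1)
  have hx_ge : 1 / (4 * q) ≤ x := by
    rw [div_le_div_iff₀ (by positivity) (by linarith)]; linarith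
  have hx_le : x ≤ 1 := by
    rw [div_le_one (by linarith)]; linarith
  have hx_nonneg : 0 ≤ x := (by positivity : (0 : ℝ) ≤ 1 / (4 * q)).trans hx_ge
  have habs : |π * x| = π * x := abs_of_nonneg (by positivity)
  have hcos := sqrt_two_mul_abs_div_pi_le_sqrt_one_sub_cos (x := π * x)
    (by rw [habs]; nlinarith [pi_pos])
  rw [habs, mul_div_assoc, mul_div_cancel_left₀ _ pi_ne_zero] at hcos
  rw [mul_div_assoc]
  calc √2 / 2 * (1 / (2 * q)) = √2 * (1 / (4 * q)) := by ring
    _ ≤ √2 * x := by gcongr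
    _ ≤ _ := hcos
end

section
/- Let N ≥ 3, r ≥ 2 be integers and let G_{N,r} be the spider web graph. For an integer m with 1 ≤ m < r, let S = (ZMod N) × {j ∈ Fin r : j < m} (the m innermost rings, containing one path endpoint). Then Cut(S) = N and Volume(S) = N(4m−1). -/
/-- The spider web graph `G_{N,r}`: the simple graph on vertex set `ZMod N × Fin r` in which
`(i,j)` and `(i',j')` are adjacent iff (`j = j'` and `i' = i ± 1 mod N`) or (`i = i'` and
`|j - j'| = 1`); realized as the box (Cartesian) product of the cycle graph on `ZMod N`
(the circulant graph with jump `1`) with the path graph on `Fin r`. -/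
def spiderWeb (N r : ℕ) : SimpleGraph (ZMod N × Fin r) :=
  SimpleGraph.boxProd (SimpleGraph.circulantGraph {(1 : ZMod N)}) (SimpleGraph.pathGraph r)

/-- `cut G S`: the number of edges of `G` with exactly one endpoint in `S`, counted as the
number of ordered pairs `(u, v)` with `u ∈ S`, `v ∉ S` and `u ~ v` (each such edge is counted
exactly once this way). -/
noncomputable def cut {V : Type*} (G : SimpleGraph V) (S : Set V) : ℕ :=
  Set.ncard {p : V × V | p.1 ∈ S ∧ p.2 ∉ S ∧ G.Adj p.1 p.2}

/-- `volume G S`: the sum of the degrees of the vertices in `S`, counted as the number of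
ordered pairs `(u, v)` with `u ∈ S` and `u ~ v`. -/
noncomputable def volume {V : Type*} (G : SimpleGraph V) (S : Set V) : ℕ :=
  Set.ncard {p : V × V | p.1 ∈ S ∧ G.Adj p.1 p.2}

/-- `I ⊆ ZMod N` is an arc of cardinality `c`: `I = {a, a+1, ..., a+c-1}` (mod `N`). -/
def IsArc (N : ℕ) (I : Set (ZMod N)) (c : ℕ) : Prop :=
  ∃ a : ZMod N, I = (fun t : ℕ => a + (t : ZMod N)) '' Set.Iio c

/-! `G_{N,r}` is the box product `C_N □ P_r` and the inner rings form the layer set `C_N × T`,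
`T = {0, …, m - 1}`. An edge leaving a layer set changes the ring coordinate, so it is an edge of
one copy of `P_r`: `Cut = N · Cut_{P_r}(T) = N · 1`. Degrees add in a box product and `C_N` is
2-regular for `N ≥ 3`: `Volume = N · (2 |T| + Vol_{P_r}(T)) = N · (2m + (2m - 1))`. -/

open SimpleGraph Finset

variable {V α β : Type*}

lemma volume_eq_sum_degree [Fintype V] (G : SimpleGraph V) [G.LocallyFinite] (S : Finset V) :
    volume G S = ∑ v ∈ S, G.degree v := by
  classical
  have hset : {p : V × V | p.1 ∈ (S : Set V) ∧ G.Adj p.1 p.2} =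
      ↑({p ∈ S ×ˢ (univ : Finset V) | G.Adj p.1 p.2}) := by
    ext; simp
  rw [volume, hset, Set.ncard_coe_finset, card_filter, sum_product]
  refine sum_congr rfl fun v _ => ?_
  rw [← card_filter, ← card_neighborFinset_eq_degree]
  congr 1
  ext
  simp

lemma cut_boxProd_univ_prod (G : SimpleGraph α) (H : SimpleGraph β) (T : Set β) :
    cut (G □ H) (Set.univ ×ˢ T) = Nat.card α * cut H T := by
  have hset : {p : (α × β) × (α × β) |
        p.1 ∈ Set.univ ×ˢ T ∧ p.2 ∉ Set.univ ×ˢ T ∧ (G □ H).Adj p.1 p.2} =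
      (fun q : α × (β × β) => ((q.1, q.2.1), (q.1, q.2.2))) ''
        (Set.univ ×ˢ {p : β × β | p.1 ∈ T ∧ p.2 ∉ T ∧ H.Adj p.1 p.2}) := by
    ext ⟨⟨a, b⟩, ⟨a', b'⟩⟩
    simp only [Set.mem_ofPred_eq, Set.mem_prod, Set.mem_univ, true_and, boxProd_adj,
      Set.mem_image, Prod.exists, Prod.mk.injEq]
    constructor
    · rintro ⟨hb, hb', ⟨-, rfl⟩ | ⟨hH, rfl⟩⟩
      · exact absurd hb hb'
      · exact ⟨a, b, b', ⟨hb, hb', hH⟩, ⟨rfl, rfl⟩, rfl, rfl⟩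
    · rintro ⟨a, b, b', ⟨hb, hb', hH⟩, ⟨rfl, rfl⟩, rfl, rfl⟩
      exact ⟨hb, hb', Or.inr ⟨hH, rfl⟩⟩
  rw [cut, hset, Set.ncard_image_of_injective _ fun q q' h => by grind, Set.ncard_prod,
    Set.ncard_univ, cut]

lemma volume_boxProd_univ_prod [Fintype α] [Fintype β] {G : SimpleGraph α} {H : SimpleGraph β}
    [G.LocallyFinite] [H.LocallyFinite] {d : ℕ} (hG : G.IsRegularOfDegree d) (T : Finset β) :
    volume (G □ H) (Set.univ ×ˢ T) = Fintype.card α * (d * #T + volume H T) := by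
  classical
  rw [← coe_univ, ← coe_product, volume_eq_sum_degree, volume_eq_sum_degree, sum_product]
  have hrow (a : α) : ∑ b ∈ T, (G □ H).degree (a, b) = d * #T + ∑ b ∈ T, H.degree b := by
    rw [mul_comm, ← smul_eq_mul, ← sum_const, ← sum_add_distrib]
    exact sum_congr rfl fun b _ => by rw [degree_boxProd, hG.degree_eq]
  simp only [hrow, sum_const, card_univ, smul_eq_mul]

lemma SimpleGraph.circulantGraph_singleton_isRegularOfDegree_two {G : Type*} [AddCommGroup G]
    [Fintype G] [DecidableEq G] {a : G} (ha : a + a ≠ 0) :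
    (circulantGraph {a}).IsRegularOfDegree 2 := by
  intro v
  have ha0 : a ≠ 0 := by rintro rfl; simp at ha
  have : ({w | (circulantGraph {a}).Adj v w} : Finset G) = {v - a, v + a} := by
    ext w
    simp only [mem_filter, mem_univ, true_and, circulantGraph_adj, Set.mem_singleton_iff,
      mem_insert, mem_singleton]
    constructor
    · rintro ⟨-, h | h⟩
      · left; rw [← h]; abel
      · right; rw [← h]; abel
    · rintro (rfl | rfl)
      · exact ⟨fun h => ha0 (by simpa using h.symm), Or.inl (by abel)⟩
      · exact ⟨fun h => ha0 (by simpa using h.symm), Or.inr (by abel)⟩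
  rw [← card_neighborFinset_eq_degree, neighborFinset_eq_filter, this, card_pair]
  intro h
  exact ha (by linear_combination (norm := abel) -h)

lemma ZMod.one_add_one_ne_zero {N : ℕ} (hN : 3 ≤ N) : (1 : ZMod N) + 1 ≠ 0 := by
  rw [← Nat.cast_one, ← Nat.cast_add, Ne, ZMod.natCast_eq_zero_iff]
  exact fun h => by have := Nat.le_of_dvd (by norm_num) h; omega

instance (r : ℕ) : DecidableRel (pathGraph r).Adj :=
  fun _ _ => decidable_of_iff _ pathGraph_adj.symm

lemma SimpleGraph.degree_pathGraph_of_succ_lt {r : ℕ} (j : Fin r) (hj : (j : ℕ) + 1 < r) :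
    (pathGraph r).degree j = if (j : ℕ) = 0 then 1 else 2 := by
  rw [← card_neighborFinset_eq_degree, neighborFinset_eq_filter]
  split_ifs with h0
  · have : ({j' | (pathGraph r).Adj j j'} : Finset (Fin r)) = {⟨1, by omega⟩} := by
      ext j'
      simp only [mem_filter, mem_univ, true_and, pathGraph_adj, mem_singleton, Fin.ext_iff]
      omega
    rw [this, card_singleton]
  · have : ({j' | (pathGraph r).Adj j j'} : Finset (Fin r)) =
        {⟨j - 1, by omega⟩, ⟨j + 1, hj⟩} := by
      ext j'
      simp only [mem_filter, mem_univ, true_and, pathGraph_adj, mem_insert, mem_singleton,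
        Fin.ext_iff]
      omega
    rw [this, card_pair (by simp [Fin.ext_iff])]

lemma Fin.setOf_val_lt_eq_Iio {r m : ℕ} (hmr : m < r) :
    {j : Fin r | (j : ℕ) < m} = ↑(Iio (⟨m, hmr⟩ : Fin r)) := by
  ext j
  simp [Fin.lt_def]

lemma cut_pathGraph_Iio {r m : ℕ} (hm : 0 < m) (hmr : m < r) :
    cut (pathGraph r) (Iio (⟨m, hmr⟩ : Fin r)) = 1 := by
  have : {p : Fin r × Fin r | p.1 ∈ (Iio (⟨m, hmr⟩ : Fin r) : Set (Fin r)) ∧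
      p.2 ∉ (Iio (⟨m, hmr⟩ : Fin r) : Set (Fin r)) ∧ (pathGraph r).Adj p.1 p.2} =
      {(⟨m - 1, by omega⟩, ⟨m, hmr⟩)} := by
    ext ⟨a, b⟩
    simp [pathGraph_adj, Fin.lt_def, Fin.ext_iff]
    omega
  rw [cut, this, Set.ncard_singleton]

lemma volume_pathGraph_Iio {r m : ℕ} (hm : 0 < m) (hmr : m < r) :
    volume (pathGraph r) (Iio (⟨m, hmr⟩ : Fin r)) = 2 * m - 1 := by
  have hdeg : ∀ j ∈ Iio (⟨m, hmr⟩ : Fin r),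
      (pathGraph r).degree j = if (j : ℕ) = 0 then 1 else 2 :=
    fun j hj => degree_pathGraph_of_succ_lt j (by rw [mem_Iio, Fin.lt_def] at hj; omega)
  have hval := sum_map (Iio (⟨m, hmr⟩ : Fin r)) Fin.valEmbedding fun t => if t = 0 then 1 else 2
  rw [Fin.map_valEmbedding_Iio, Nat.Iio_eq_range] at hval
  rw [volume_eq_sum_degree, sum_congr rfl hdeg]
  simp only [Fin.valEmbedding_apply] at hval
  rw [← hval]
  obtain ⟨k, rfl⟩ : ∃ k, m = k + 1 := ⟨m - 1, by omega⟩
  simp [sum_range_succ']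
  omega

theorem spiderWeb_innerRings_cut_volume_general (N r m : ℕ) (hN : 3 ≤ N)
    (hm1 : 1 ≤ m) (hmr : m < r) :
    cut (spiderWeb N r) ((Set.univ : Set (ZMod N)) ×ˢ {j : Fin r | (j : ℕ) < m}) = N ∧
    volume (spiderWeb N r) ((Set.univ : Set (ZMod N)) ×ˢ {j : Fin r | (j : ℕ) < m})
      = N * (4 * m - 1) := by
  have : NeZero N := ⟨by omega⟩
  have hcycle := circulantGraph_singleton_isRegularOfDegree_two (ZMod.one_add_one_ne_zero hN)
  rw [spiderWeb, Fin.setOf_val_lt_eq_Iio hmr]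
  constructor
  · rw [cut_boxProd_univ_prod, cut_pathGraph_Iio hm1 hmr, Nat.card_zmod, mul_one]
  · rw [volume_boxProd_univ_prod hcycle, volume_pathGraph_Iio hm1 hmr, Fin.card_Iio, Fin.val_mk,
      ZMod.card]
    congr 1
    omega

/-- For `N ≥ 3`, `r ≥ 2` and `1 ≤ m < r`, the set
`S = ZMod N × {j : Fin r | j < m}` of the `m` innermost rings (containing one path endpoint)
of the spider web graph `G_{N,r}` satisfies `Cut(S) = N` and `Volume(S) = N(4m − 1)`. -/
theorem spiderWeb_innerRings_cut_volume (N r m : ℕ) (hN : 3 ≤ N) (hr : 2 ≤ r)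
    (hm1 : 1 ≤ m) (hmr : m < r) :
    cut (spiderWeb N r) ((Set.univ : Set (ZMod N)) ×ˢ {j : Fin r | (j : ℕ) < m}) = N ∧
    volume (spiderWeb N r) ((Set.univ : Set (ZMod N)) ×ˢ {j : Fin r | (j : ℕ) < m})
      = N * (4 * m - 1) :=
  spiderWeb_innerRings_cut_volume_general N r m hN hm1 hmr
end
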